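/- Let λ ∈ ℂ, p = x − λ ∈ ℂ[x], ι a finite index set, d : ι → ℕ with d(j) ≥ 1 for all j, and V = ⨁_{j ∈ ι} ℂ[x]/(p^{d(j)}). Let i_1 < i_2 < ⋯ < i_m be the distinct values of d, and set Δ_1 = i_1 and Δ_k = i_k − i_{k−1} for k > 1. Then the number of fully invariant subspaces of V equals ∏_{k=1}^{m} (1 + Δ_k). -/

import Mathlib

set_option synthInstance.maxHeartbeats 1000000
set_option maxHeartbeats 1000000

open Polynomial DirectSum

/-- A subspace `W` of `V = ⨁_j ℂ[x]/(p^{d j})` is fully invariant if it is preserved by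
every `ℂ[x]`-module endomorphism of `V`. -/
def FullyInv (lam : ℂ) (ι : Type*) [DecidableEq ι] (d : ι → ℕ)
    (W : Submodule ℂ (⨁ j : ι, Polynomial ℂ ⧸ Ideal.span {(X - C lam) ^ d j})) : Prop :=
  ∀ φ : (⨁ j : ι, Polynomial ℂ ⧸ Ideal.span {(X - C lam) ^ d j}) →ₗ[Polynomial ℂ]
      (⨁ j : ι, Polynomial ℂ ⧸ Ideal.span {(X - C lam) ^ d j}),
    ∀ w ∈ W, φ w ∈ W

/-!
A fully invariant subspace is stable under multiplication by `x`, so it is a `ℂ[x]`-submodule;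
being stable under the projections onto the summands `Vⱼ`, it is the sum of its intersections
with them, i.e. `⨁ⱼ p ^ (c j) Vⱼ` for some `c ≤ d`, as `Vⱼ` is uniserial. Stability under all maps
`Vⱼ → Vⱼ'` amounts to `c j' ≤ c j + (d j' - d j)`: `c` depends only on `d j`, and both `c` and
`d - c` increase with `d`. Such a `c` is determined by its increments along `i₁ < ⋯ < iₘ`, the
`k`-th of which is an arbitrary number in `[0, Δₖ]`.
-/

namespace Ideal.Quotient

variable {R : Type*} [CommRing R] {p : R} {n : ℕ}

theorem mk_eq_smul_mk_one (I : Ideal R) (z : R) : mk I z = z • mk I 1 := by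
  simp [Algebra.smul_def]

theorem mk_mem_span_mk_of_dvd {I : Ideal R} {x z : R} (h : x ∣ z) : mk I z ∈ R ∙ mk I x := by
  obtain ⟨r, rfl⟩ := h
  exact Submodule.mem_span_singleton.2 ⟨r, by rw [mk_eq_smul_mk_one _ x, smul_smul, mul_comm,
    ← mk_eq_smul_mk_one]⟩

theorem mk_mem_span_mk_pow_iff {b : ℕ} (hb : b ≤ n) {z : R} :
    mk (span {p ^ n}) z ∈ R ∙ mk (span {p ^ n}) (p ^ b) ↔ p ^ b ∣ z := by
  refine ⟨fun h => ?_, mk_mem_span_mk_of_dvd⟩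
  obtain ⟨r, hr⟩ := Submodule.mem_span_singleton.1 h
  obtain ⟨s, hs⟩ := mem_span_singleton.1 (Ideal.Quotient.eq.1 hr)
  have hs : r * p ^ b - z = p ^ (n - b) * p ^ b * s := by rw [pow_sub_mul_pow p hb]; exact hs
  exact ⟨r - p ^ (n - b) * s, by linear_combination -hs⟩

noncomputable def mulPowSub (p : R) (a b : ℕ) : (R ⧸ span {p ^ a}) →ₗ[R] R ⧸ span {p ^ b} :=
  Submodule.mapQ _ _ (LinearMap.lsmul R R (p ^ (b - a))) <| by
    rw [span, Submodule.span_le, Set.singleton_subset_iff, SetLike.mem_coe, Submodule.mem_comap,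
      LinearMap.lsmul_apply, smul_eq_mul, ← pow_add]
    exact mem_span_singleton.2 (pow_dvd_pow p (by omega))

theorem mulPowSub_mk (a b : ℕ) (z : R) :
    mulPowSub p a b (mk _ z) = mk (span {p ^ b}) (p ^ (b - a) * z) :=
  rfl

variable [IsDomain R]

theorem mk_pow_mem_span_mk_pow_iff (hp : Prime p) {a b : ℕ} (hb : b ≤ n) :
    mk (span {p ^ n}) (p ^ a) ∈ R ∙ mk (span {p ^ n}) (p ^ b) ↔ b ≤ a := by
  rw [mk_mem_span_mk_pow_iff hb, pow_dvd_pow_iff hp.ne_zero hp.not_isUnit]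

theorem exists_eq_span_mk_pow [IsPrincipalIdealRing R] (hp : Prime p)
    (N : Submodule R (R ⧸ span {p ^ n})) : ∃ c ≤ n, N = R ∙ mk (span {p ^ n}) (p ^ c) := by
  set J := N.comap (Submodule.mkQ _)
  have hJ := Submodule.IsPrincipal.span_singleton_generator J
  have hpow : p ^ n ∈ J := by simp [J]
  obtain ⟨r, hr⟩ := Submodule.mem_span_singleton.1 (hJ ▸ hpow)
  obtain ⟨c, hc, hassoc⟩ := (dvd_prime_pow hp n).1 ⟨r, by rw [← hr, smul_eq_mul, mul_comm]⟩
  refine ⟨c, hc, ?_⟩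
  calc N = J.map (Submodule.mkQ _) :=
        (Submodule.map_comap_eq_of_surjective (Submodule.mkQ_surjective _) N).symm
    _ = _ := by
      have hJc : J = span {p ^ c} := hJ.symm.trans (span_singleton_eq_span_singleton.2 hassoc)
      rw [hJc, span, Submodule.map_span, Set.image_singleton]
      rfl

theorem map_mk_pow_mem_span (hp : Prime p) {a b : ℕ}
    (g : (R ⧸ span {p ^ a}) →ₗ[R] R ⧸ span {p ^ b}) (c : ℕ) :
    g (mk _ (p ^ c)) ∈ R ∙ mk (span {p ^ b}) (p ^ (c + (b - a))) := by
  obtain ⟨s, hs⟩ := mk_surjective (g (mk _ 1))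
  have hg : ∀ z, g (mk _ z) = mk _ (z * s) := fun z => by
    rw [mk_eq_smul_mk_one _ z, map_smul, ← hs, mk_eq_smul_mk_one _ (z * s), mk_eq_smul_mk_one _ s,
      smul_smul]
  -- `p ^ a` kills `mk 1`, hence also `g (mk 1) = mk s`
  have hab : p ^ b ∣ p ^ a * s := by
    rw [← mem_span_singleton, ← eq_zero_iff_mem, ← hg,
      eq_zero_iff_mem.2 (mem_span_singleton_self _), map_zero]
  have hs : p ^ (b - a) ∣ s := by
    rcases le_total a b with h | h
    · rw [← pow_sub_mul_pow p h, mul_comm] at hab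
      exact (mul_dvd_mul_iff_left (pow_ne_zero a hp.ne_zero)).1 hab
    · simp [Nat.sub_eq_zero_of_le h]
  rw [hg, pow_add]
  exact mk_mem_span_mk_of_dvd (mul_dvd_mul_left _ hs)

theorem forall_span_mk_pow_le_comap_iff (hp : Prime p) {a b c c' : ℕ} (hc' : c' ≤ b) :
    (∀ g : (R ⧸ span {p ^ a}) →ₗ[R] R ⧸ span {p ^ b},
      R ∙ mk (span {p ^ a}) (p ^ c) ≤ (R ∙ mk (span {p ^ b}) (p ^ c')).comap g) ↔
      c' ≤ c + (b - a) := by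
  simp_rw [Submodule.span_singleton_le_iff_mem, Submodule.mem_comap]
  refine ⟨fun h => ?_, fun h g => ?_⟩
  · have := h (mulPowSub p a b)
    rwa [mulPowSub_mk, ← pow_add, mk_pow_mem_span_mk_pow_iff hp hc', add_comm] at this
  · refine Submodule.span_singleton_le_iff_mem _ _ |>.2 ?_ (map_mk_pow_mem_span hp g c)
    exact mk_mem_span_mk_of_dvd (pow_dvd_pow p h)

end Ideal.Quotient

namespace DirectSum

variable {R ι : Type*} [Semiring R] {M : ι → Type*} [∀ j, AddCommMonoid (M j)]
  [∀ j, Module R (M j)]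

variable (R) in
def piSubmodule (P : ∀ j, Submodule R (M j)) : Submodule R (⨁ j, M j) :=
  ⨅ j, (P j).comap (component R ι M j)

theorem mem_piSubmodule {P : ∀ j, Submodule R (M j)} {v : ⨁ j, M j} :
    v ∈ piSubmodule R P ↔ ∀ j, v j ∈ P j := by
  simp only [piSubmodule, Submodule.mem_iInf, Submodule.mem_comap]
  rfl

variable [DecidableEq ι]

theorem comap_lof_piSubmodule (P : ∀ j, Submodule R (M j)) (j : ι) :
    (piSubmodule R P).comap (lof R ι M j) = P j := by
  ext y
  simp only [Submodule.mem_comap, mem_piSubmodule]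
  refine ⟨fun h => by simpa using h j, fun hy j' => ?_⟩
  by_cases hj : j = j'
  · subst hj
    simpa using hy
  · simp [lof_eq_of, of_eq_of_ne _ _ _ (Ne.symm hj)]

theorem isFullyInvariant_piSubmodule {P : ∀ j, Submodule R (M j)}
    (hP : ∀ j j' (g : M j →ₗ[R] M j'), P j ≤ (P j').comap g) :
    (piSubmodule R P).IsFullyInvariant := by
  classical
  intro φ v hv
  rw [mem_piSubmodule] at hv
  rw [Submodule.mem_comap, ← sum_support_of v, map_sum]
  refine Submodule.sum_mem _ fun j _ => mem_piSubmodule.2 fun j' => ?_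
  exact hP j j' (component R ι M j' ∘ₗ φ ∘ₗ lof R ι M j) (hv j)

end DirectSum

namespace Submodule.IsFullyInvariant

variable {R ι : Type*} [Semiring R] [DecidableEq ι] {M : ι → Type*} [∀ j, AddCommMonoid (M j)]
  [∀ j, Module R (M j)] {N : Submodule R (⨁ j, M j)}

theorem comap_lof_le_comap (hN : N.IsFullyInvariant) (j j' : ι) (g : M j →ₗ[R] M j') :
    N.comap (lof R ι M j) ≤ (N.comap (lof R ι M j')).comap g := fun y hy => by
  simpa using hN (lof R ι M j' ∘ₗ g ∘ₗ component R ι M j) hy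

theorem eq_piSubmodule (hN : N.IsFullyInvariant) :
    N = piSubmodule R fun j => N.comap (lof R ι M j) := by
  classical
  ext v
  rw [mem_piSubmodule]
  refine ⟨fun hv j => hN (lof R ι M j ∘ₗ component R ι M j) hv, fun h => ?_⟩
  rw [← sum_support_of v]
  exact sum_mem fun j _ => h j

end Submodule.IsFullyInvariant

def IsAdmissible {ι : Type*} (d c : ι → ℕ) : Prop :=
  (∀ j, c j ≤ d j) ∧ ∀ j j', c j' ≤ c j + (d j' - d j)

section CyclicSum

variable {R ι : Type*} [CommRing R] [DecidableEq ι] {p : R}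

noncomputable def powSubmodule (p : R) (d c : ι → ℕ) :
    Submodule R (⨁ j, R ⧸ Ideal.span {p ^ d j}) :=
  piSubmodule R fun j => R ∙ Ideal.Quotient.mk _ (p ^ c j)

variable [IsDomain R]

theorem IsAdmissible.isFullyInvariant_powSubmodule (hp : Prime p) {d c : ι → ℕ}
    (hc : IsAdmissible d c) : (powSubmodule p d c).IsFullyInvariant :=
  isFullyInvariant_piSubmodule fun j j' =>
    (Ideal.Quotient.forall_span_mk_pow_le_comap_iff hp (hc.1 j')).2 (hc.2 j j')

theorem powSubmodule_injOn (hp : Prime p) (d : ι → ℕ) :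
    Set.InjOn (powSubmodule p d) {c | ∀ j, c j ≤ d j} := by
  intro c hc c' hc' h
  funext j
  have hj := congrArg (Submodule.comap (lof R ι (fun j => R ⧸ Ideal.span {p ^ d j}) j)) h
  simp only [powSubmodule, comap_lof_piSubmodule] at hj
  apply le_antisymm
  · rw [← Ideal.Quotient.mk_pow_mem_span_mk_pow_iff hp (hc j), hj]
    exact Submodule.mem_span_singleton_self _
  · rw [← Ideal.Quotient.mk_pow_mem_span_mk_pow_iff hp (hc' j), ← hj]
    exact Submodule.mem_span_singleton_self _

theorem Submodule.IsFullyInvariant.exists_eq_powSubmodule [IsPrincipalIdealRing R] (hp : Prime p)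
    {d : ι → ℕ} {N : Submodule R (⨁ j, R ⧸ Ideal.span {p ^ d j})} (hN : N.IsFullyInvariant) :
    ∃ c, IsAdmissible d c ∧ N = powSubmodule p d c := by
  choose c hcd hc using fun j =>
    Ideal.Quotient.exists_eq_span_mk_pow hp
      (N.comap (lof R ι (fun j => R ⧸ Ideal.span {p ^ d j}) j))
  refine ⟨c, ⟨hcd, fun j j' => ?_⟩, ?_⟩
  · rw [← Ideal.Quotient.forall_span_mk_pow_le_comap_iff hp (hcd j')]
    intro g
    rw [← hc, ← hc]
    exact hN.comap_lof_le_comap j j' g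
  · rw [hN.eq_piSubmodule]
    simp_rw [hc]
    rfl

theorem card_fullyInvariant_eq_card_isAdmissible [IsPrincipalIdealRing R] (hp : Prime p)
    (d : ι → ℕ) :
    Nat.card {N : Submodule R (⨁ j, R ⧸ Ideal.span {p ^ d j}) // N.IsFullyInvariant} =
      Nat.card {c : ι → ℕ // IsAdmissible d c} := by
  refine (Nat.card_eq_of_bijective
    (fun c => ⟨powSubmodule p d c.1, c.2.isFullyInvariant_powSubmodule hp⟩) ⟨?_, ?_⟩).symm
  · intro c c' h
    exact Subtype.ext (powSubmodule_injOn hp d c.2.1 c'.2.1 (congrArg Subtype.val h))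
  · rintro ⟨N, hN⟩
    obtain ⟨c, hc, rfl⟩ := hN.exists_eq_powSubmodule hp
    exact ⟨⟨c, hc⟩, rfl⟩

end CyclicSum

section Admissible

variable {ι κ : Type*}

theorem IsAdmissible.eq_of_eq {d c : ι → ℕ} (hc : IsAdmissible d c) {j j' : ι} (h : d j = d j') :
    c j = c j' := by
  have := hc.2 j j'
  have := hc.2 j' j
  omega

theorem IsAdmissible.comp {d c : ι → ℕ} (hc : IsAdmissible d c) (σ : κ → ι) :
    IsAdmissible (d ∘ σ) (c ∘ σ) :=
  ⟨fun k => hc.1 (σ k), fun k k' => hc.2 (σ k) (σ k')⟩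

theorem card_isAdmissible_congr {d : ι → ℕ} {i : κ → ℕ} (hdi : ∀ j, ∃ k, d j = i k)
    (hid : ∀ k, ∃ j, d j = i k) :
    Nat.card {c : ι → ℕ // IsAdmissible d c} = Nat.card {f : κ → ℕ // IsAdmissible i f} := by
  choose τ hτ using hdi
  choose σ hσ using hid
  have hd : d = i ∘ τ := funext hτ
  have hi : i = d ∘ σ := (funext hσ).symm
  refine Nat.card_congr
    { toFun := fun c => ⟨c.1 ∘ σ, hi ▸ c.2.comp σ⟩
      invFun := fun f => ⟨f.1 ∘ τ, hd ▸ f.2.comp τ⟩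
      left_inv := fun c => Subtype.ext <| funext fun j => c.2.eq_of_eq (by rw [hσ, hτ])
      right_inv := fun f => Subtype.ext <| funext fun k => f.2.eq_of_eq (by rw [← hτ, hσ]) }

theorem isAdmissible_iff_monotone [LinearOrder ι] {d c : ι → ℕ} (hd : Monotone d) :
    IsAdmissible d c ↔ (∀ j, c j ≤ d j) ∧ Monotone c ∧ Monotone fun j => (d j : ℤ) - c j := by
  refine and_congr_right fun hcd => ⟨fun h => ⟨fun j j' hjj' => ?_, fun j j' hjj' => ?_⟩,
    fun ⟨hc, hdc⟩ j j' => ?_⟩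
  · have := h j' j
    have := hd hjj'
    omega
  · show (d j : ℤ) - c j ≤ d j' - c j'
    have := h j j'
    have := hd hjj'
    have := hcd j
    have := hcd j'
    omega
  · rcases le_total j j' with hjj' | hjj'
    · have : (d j : ℤ) - c j ≤ d j' - c j' := hdc hjj'
      have := hcd j
      have := hcd j'
      omega
    · have := hc hjj'
      omega

end Admissible

namespace Matrix

theorem monotone_vecCons_iff {α : Type*} [Preorder α] {m : ℕ} {x : α} {f : Fin m → α} :
    Monotone (vecCons x f) ↔ (∀ k, x ≤ f k) ∧ Monotone f := by
  rw [monotone_iff_forall_lt, monotone_iff_forall_lt]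
  exact Fin.liftFun_cons _

theorem vecCons_zero_partialSum_succ {M : Type*} [AddMonoid M] {m : ℕ} (g : Fin m → M) :
    vecCons 0 (fun k => Fin.partialSum g k.succ) = Fin.partialSum g := by
  rw [← Fin.partialSum_zero g]
  exact Fin.cons_self_tail _

end Matrix

section MonotoneSplit

open Matrix

variable {m : ℕ}

-- Prepending `0` to `i` and `f` turns the bound `f ≤ i` into monotonicity of `i - f` at the new
-- first index, and makes `Δ` the sequence of increments of `vecCons 0 i`.
theorem isAdmissible_iff_monotone_vecCons {i f : Fin m → ℕ} (hi : Monotone i) :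
    IsAdmissible i f ↔ Monotone (vecCons 0 f) ∧
      Monotone fun k => ((vecCons 0 i k : ℕ) : ℤ) - vecCons 0 f k := by
  have hcons : (fun k => ((vecCons 0 i k : ℕ) : ℤ) - vecCons 0 f k) =
      vecCons 0 fun k => (i k : ℤ) - f k := by
    funext k
    cases k using Fin.cases <;> simp
  rw [hcons, monotone_vecCons_iff, monotone_vecCons_iff, isAdmissible_iff_monotone hi]
  simp only [zero_le, sub_nonneg, Nat.cast_le]
  tauto

def monotoneSplitEquiv (I : Fin (m + 1) → ℕ) (hI : Monotone I) :
    {f : Fin m → ℕ // Monotone (vecCons 0 f) ∧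
      Monotone fun k => (I k : ℤ) - vecCons 0 f k} ≃
      ∀ k : Fin m, Fin (I k.succ - I k.castSucc + 1) where
  toFun f k := ⟨vecCons 0 f.1 k.succ - vecCons 0 f.1 k.castSucc, by
    have : (I k.castSucc : ℤ) - vecCons 0 f.1 k.castSucc ≤ I k.succ - vecCons 0 f.1 k.succ :=
      f.2.2 k.castSucc_le_succ
    have := f.2.1 k.castSucc_le_succ
    have := hI k.castSucc_le_succ
    omega⟩
  invFun e := ⟨fun k => Fin.partialSum (fun l => (e l : ℕ)) k.succ, by
    rw [vecCons_zero_partialSum_succ, Fin.monotone_iff_le_succ, Fin.monotone_iff_le_succ]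
    refine ⟨fun k => ?_, fun k => ?_⟩ <;> simp only [Fin.partialSum_succ]
    · omega
    · have := (e k).2
      have := hI k.castSucc_le_succ
      omega⟩
  left_inv f := by
    have hsum : Fin.partialSum (fun k => vecCons 0 f.1 k.succ - vecCons 0 f.1 k.castSucc) =
        vecCons 0 f.1 := by
      funext k
      induction k using Fin.induction with
      | zero => simp
      | succ k ih =>
        have := f.2.1 k.castSucc_le_succ
        rw [Fin.partialSum_succ, ih]
        omega
    exact Subtype.ext <| funext fun k => by simpa using congrFun hsum k.succ
  right_inv e := by
    funext k
    ext
    dsimp only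
    rw [vecCons_zero_partialSum_succ, Fin.partialSum_succ]
    omega

theorem card_isAdmissible_fin {i : Fin m → ℕ} (hi : Monotone i) :
    Nat.card {f : Fin m → ℕ // IsAdmissible i f} =
      ∏ k : Fin m, (i k - vecCons 0 i k.castSucc + 1) := by
  have hI : Monotone (vecCons 0 i) := monotone_vecCons_iff.2 ⟨by simp, hi⟩
  rw [Nat.card_congr ((Equiv.subtypeEquivRight fun f => isAdmissible_iff_monotone_vecCons hi).trans
    (monotoneSplitEquiv _ hI)), Nat.card_pi]
  simp

end MonotoneSplit

theorem card_isFullyInvariant_restrictScalars {K R M : Type*} [CommSemiring K] [CommSemiring R]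
    [Algebra K R] [AddCommMonoid M] [Module K M] [Module R M] [IsScalarTower K R M] :
    Nat.card {W : Submodule K M // ∀ φ : M →ₗ[R] M, ∀ w ∈ W, φ w ∈ W} =
      Nat.card {N : Submodule R M // N.IsFullyInvariant} := by
  refine (Nat.card_eq_of_bijective (fun N => ⟨N.1.restrictScalars K, fun φ _ hw => N.2 φ hw⟩)
    ⟨fun N N' h => Subtype.ext ?_, fun ⟨W, hW⟩ => ?_⟩).symm
  · exact Submodule.restrictScalars_injective K R M (congrArg Subtype.val h)
  · exact ⟨⟨{ W with smul_mem' := fun r w hw => hW (r • LinearMap.id) w hw },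
      fun φ w hw => hW φ w hw⟩, rfl⟩

theorem stmt14_general (lam : ℂ) (ι : Type*) [DecidableEq ι]
    (d : ι → ℕ)
    (m : ℕ) (i : Fin m → ℕ) (hmono : StrictMono i)
    (hrange : ∀ j : ι, ∃ k : Fin m, d j = i k) (hsur : ∀ k : Fin m, ∃ j : ι, d j = i k)
    (Δ : Fin m → ℕ)
    (hΔ : ∀ k : Fin m, Δ k = if k.val = 0 then i k
      else i k - i ⟨k.val - 1, Nat.lt_of_le_of_lt (Nat.sub_le _ _) k.isLt⟩) :
    Nat.card {W : Submodule ℂ (⨁ j : ι, Polynomial ℂ ⧸ Ideal.span {(X - C lam) ^ d j}) //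
        FullyInv lam ι d W} = ∏ k : Fin m, (1 + Δ k) := by
  have hΔ_eq : ∀ k, i k - Matrix.vecCons 0 i k.castSucc = Δ k := by
    rintro ⟨_ | k, hk⟩ <;> simp [hΔ]
  calc _ = Nat.card {N : Submodule ℂ[X] (⨁ j : ι, ℂ[X] ⧸ Ideal.span {(X - C lam) ^ d j}) //
          N.IsFullyInvariant} := card_isFullyInvariant_restrictScalars
    _ = Nat.card {c : ι → ℕ // IsAdmissible d c} :=
        card_fullyInvariant_eq_card_isAdmissible (prime_X_sub_C lam) d
    _ = Nat.card {f : Fin m → ℕ // IsAdmissible i f} := card_isAdmissible_congr hrange hsur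
    _ = ∏ k : Fin m, (1 + Δ k) := by
        simp_rw [card_isAdmissible_fin hmono.monotone, hΔ_eq, add_comm]

/-- For `V = ⨁_j ℂ[x]/(p^{d j})` with distinct block sizes `i 0 < ⋯ < i (m-1)` and block
increments `Δ 0 = i 0`, `Δ k = i k - i (k-1)`, the number of fully invariant subspaces of
`V` equals `∏ k (1 + Δ k)`. -/
theorem stmt14 (lam : ℂ) (ι : Type*) [Fintype ι] [DecidableEq ι]
    (d : ι → ℕ) (hd : ∀ j, 1 ≤ d j)
    (m : ℕ) (i : Fin m → ℕ) (hmono : StrictMono i)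
    (hrange : ∀ j : ι, ∃ k : Fin m, d j = i k) (hsur : ∀ k : Fin m, ∃ j : ι, d j = i k)
    (Δ : Fin m → ℕ)
    (hΔ : ∀ k : Fin m, Δ k = if k.val = 0 then i k
      else i k - i ⟨k.val - 1, Nat.lt_of_le_of_lt (Nat.sub_le _ _) k.isLt⟩) :
    Nat.card {W : Submodule ℂ (⨁ j : ι, Polynomial ℂ ⧸ Ideal.span {(X - C lam) ^ d j}) //
        FullyInv lam ι d W} = ∏ k : Fin m, (1 + Δ k) :=
  stmt14_general lam ι d m i hmono hrange hsur Δ hΔ
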